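/- In the polynomial ring ℂ[l_1, l_2, l_3, t_{11}, t_{22}, t_{12}, t_{13}, t_{23}] (with t_{jk} = t_{kj} and t_{33} := −t_{11} − t_{22}), the four polynomials C^{(2)} := Σ_i l_i² + 2Σ_{i,k} t_{ik}², C^{(3)} := Σ_{i,k} l_it_{ik}l_k − (4/3)Σ_{i,k,l} t_{ik}t_{kl}t_{li}, C^{(2,0)} := Σ_i l_i², and C_3 := Σ_{i,k,l} t_{ik}t_{kl}t_{li} (all sums over indices from 1 to 3) are algebraically independent over ℂ. -/

import Mathlib

open MvPolynomial

/-- The eight polynomial variables: `Sum.inl i` is `l_{i+1}`; `Sum.inr 0, …, inr 4` are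
`t_{11}, t_{22}, t_{12}, t_{13}, t_{23}`. -/
abbrev ElliottVars := Fin 3 ⊕ Fin 5

/-- The angular momentum variables `l_1, l_2, l_3`. -/
noncomputable def lv (i : Fin 3) : MvPolynomial ElliottVars ℂ := X (Sum.inl i)

/-- The symmetric traceless matrix of quadrupole variables `t_{jk}` (with
`t_{33} = −t_{11} − t_{22}`). -/
noncomputable def tv : Matrix (Fin 3) (Fin 3) (MvPolynomial ElliottVars ℂ) :=
  !![X (Sum.inr 0), X (Sum.inr 2), X (Sum.inr 3);
     X (Sum.inr 2), X (Sum.inr 1), X (Sum.inr 4);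
     X (Sum.inr 3), X (Sum.inr 4), -X (Sum.inr 0) - X (Sum.inr 1)]

/-- The quadratic Casimir invariant `C^{(2)} = Σ l_i² + 2 Σ t_{ik}²` of `su(3)`. -/
noncomputable def C2e : MvPolynomial ElliottVars ℂ :=
  (∑ i, lv i ^ 2) + 2 * ∑ i, ∑ k, tv i k ^ 2

/-- The cubic Casimir invariant `C^{(3)} = Σ l_it_{ik}l_k − (4/3) Σ t_{ik}t_{kl}t_{li}`. -/
noncomputable def C3e : MvPolynomial ElliottVars ℂ :=
  (∑ i, ∑ k, lv i * tv i k * lv k)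
    - (4 / 3 : ℂ) • ∑ i, ∑ k, ∑ l, tv i k * tv k l * tv l i

/-- The Casimir invariant `C^{(2,0)} = Σ l_i²` of the `so(3)` subalgebra. -/
noncomputable def C20e : MvPolynomial ElliottVars ℂ :=
  ∑ i, lv i ^ 2

/-- The contracted cubic invariant `C_3 = Σ t_{ik}t_{kl}t_{li}`. -/
noncomputable def C3contr : MvPolynomial ElliottVars ℂ :=
  ∑ i, ∑ k, ∑ l, tv i k * tv k l * tv l i


/-!
A polynomial relation among the four invariants would also hold among their images under any
ℂ-algebra map. Over the fraction field of `ℂ[a, b, z, c]`, values of `l` and `t` built from an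
isotropic vector of `Σ lᵢ²` make `C^{(2)}, C^{(3)}, C^{(2,0)}, C_3` equal to `a, b, z², c`,
which are algebraically independent.
-/

theorem Complex.algebraMap_I_sq {A : Type*} [Ring A] [Algebra ℂ A] :
    algebraMap ℂ A Complex.I ^ 2 = -1 := by
  rw [← map_pow, Complex.I_sq, map_neg, map_one]

theorem MvPolynomial.algebraicIndependent_X_pow {σ R : Type*} [CommRing R] {n : σ → ℕ}
    (hn : ∀ i, 0 < n i) : AlgebraicIndependent R fun i ↦ (X i : MvPolynomial σ R) ^ n i := by
  simpa using algebraicIndependent_polynomial_aeval_X (fun i ↦ Polynomial.X ^ n i)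
    fun i ↦ (Polynomial.transcendental_X R).pow (hn i)

namespace Elliott

variable {K : Type*} [Field K] [Algebra ℂ K]

theorem charZero_of_complexAlgebra : CharZero K :=
  charZero_of_injective_algebraMap (algebraMap ℂ K).injective

attribute [local instance] charZero_of_complexAlgebra

/- With `f = (1, -i, 0)`, `g = (1, i, 0)`, `e = (0, 0, 1)`, so that `f ⬝ f = 0` and `f ⬝ g = 2`,
this is `l = r f + z e` and `t = (c/12) f fᵀ + (g eᵀ + e gᵀ) + s (f eᵀ + e fᵀ)`; then
`Σ lᵢ² = z²`, `Σ t_{ik}² = 8 s`, `Σ t_{ik}t_{kl}t_{li} = c` and `Σ lᵢt_{ik}l_k = 4 r z`. -/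
noncomputable def witness (a b c z : K) : ElliottVars → K :=
  let i := algebraMap ℂ K Complex.I
  let r := (3 * b + 4 * c) / (12 * z)
  let s := (a - z ^ 2) / 16
  Sum.elim ![r, -(i * r), z] ![c / 12, -(c / 12), -(i * c) / 12, 1 + s, i * (1 - s)]

theorem aeval_witness_C20e (a b c z : K) : aeval (witness a b c z) C20e = z ^ 2 := by
  simp only [C20e, lv, witness, Fin.sum_univ_three, Matrix.cons_val_zero, Matrix.cons_val_one,
    Matrix.cons_val, map_add, map_pow, aeval_X, Sum.elim_inl]
  grind [Complex.algebraMap_I_sq]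

theorem aeval_witness_C3contr (a b c z : K) : aeval (witness a b c z) C3contr = c := by
  simp only [C3contr, tv, witness, Fin.sum_univ_three, Matrix.of_apply, Matrix.cons_val',
    Matrix.cons_val_fin_one, Matrix.cons_val_zero, Matrix.cons_val_one, Matrix.cons_val, map_add,
    map_sub, map_neg, map_mul, aeval_X, Sum.elim_inr]
  grind [Complex.algebraMap_I_sq]

theorem aeval_witness_C2e (a b c z : K) : aeval (witness a b c z) C2e = a := by
  simp only [C2e, lv, tv, witness, Fin.sum_univ_three, Matrix.of_apply, Matrix.cons_val',
    Matrix.cons_val_fin_one, Matrix.cons_val_zero, Matrix.cons_val_one, Matrix.cons_val, map_add,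
    map_sub, map_neg, map_mul, map_pow, map_ofNat, aeval_X, Sum.elim_inl, Sum.elim_inr]
  grind [Complex.algebraMap_I_sq]

theorem aeval_witness_C3e (a b c : K) {z : K} (hz : z ≠ 0) :
    aeval (witness a b c z) C3e = b := by
  simp only [C3e, lv, tv, witness, Fin.sum_univ_three, Matrix.of_apply, Matrix.cons_val',
    Matrix.cons_val_fin_one, Matrix.cons_val_zero, Matrix.cons_val_one, Matrix.cons_val, map_add,
    map_sub, map_neg, map_mul, aeval_X, Sum.elim_inl, Sum.elim_inr, smul_eq_C_mul, aeval_C,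
    map_div₀, map_ofNat]
  grind [Complex.algebraMap_I_sq]

end Elliott

open Elliott in
/-- The polynomials `C^{(2)}`, `C^{(3)}`, `C^{(2,0)}` and `C_3` of the
Elliott chain `su(3) ⊃ so(3)` are algebraically independent over `ℂ`. -/
theorem stmt12 : AlgebraicIndependent ℂ ![C2e, C3e, C20e, C3contr] := by
  let P := MvPolynomial (Fin 4) ℂ
  let K := FractionRing P
  let x : Fin 4 → K := fun i ↦ algebraMap P K (X i)
  have hx₂ : x 2 ≠ 0 := (map_ne_zero_iff _ (IsFractionRing.injective P K)).mpr (X_ne_zero 2)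
  refine AlgebraicIndependent.of_comp (aeval (witness (x 0) (x 1) (x 3) (x 2))) ?_
  have himage : aeval (witness (x 0) (x 1) (x 3) (x 2)) ∘ ![C2e, C3e, C20e, C3contr] =
      IsScalarTower.toAlgHom ℂ P K ∘ fun i ↦ X i ^ ![1, 1, 2, 1] i := by
    funext i
    fin_cases i <;>
      simp [x, aeval_witness_C2e, aeval_witness_C3e _ _ _ hx₂, aeval_witness_C20e,
        aeval_witness_C3contr]
  rw [himage]
  exact (algebraicIndependent_X_pow (by decide)).map' (IsFractionRing.injective P K)
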